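/- Suppose O ⟂ M | (A, Y) (MNAR) and P(O=1 | Y=y, A=a) > 0 for all y. Then for each mediator value m and action a: P(M=m, O=0 | A=a) = Σ_{y} P(M=m, Y=y, O=1 | A=a) · P(O=0 | Y=y, A=a) / P(O=1 | Y=y, A=a). (The observed joint, weighted by inverse odds of missingness, reproduces the missing-data probability.) -/

import Mathlib

open scoped BigOperators Classical

/-- Probability of the event `S` under the weight function `p` on a finite sample space. -/
noncomputable def Pr {Ω : Type*} [Fintype Ω] (p : Ω → ℝ) (S : Ω → Prop) : ℝ :=
  ∑ ω, if S ω then p ω else 0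

/-- Conditional probability `P(S | T)` (by convention `0` if `P(T) = 0`). -/
noncomputable def CPr {Ω : Type*} [Fintype Ω] (p : Ω → ℝ) (S T : Ω → Prop) : ℝ :=
  Pr p (fun ω => S ω ∧ T ω) / Pr p T

/-- Conditional expectation `E[Y | S]` (by convention `0` if `P(S) = 0`). -/
noncomputable def CExp {Ω : Type*} [Fintype Ω] (p : Ω → ℝ) (Y : Ω → ℝ) (S : Ω → Prop) : ℝ :=
  (∑ ω, if S ω then p ω * Y ω else 0) / Pr p S


lemma Pr_nonneg {Ω : Type*} [Fintype Ω] (p : Ω → ℝ) (hp0 : ∀ ω, 0 ≤ p ω) (S : Ω → Prop) :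
    0 ≤ Pr p S := by
  apply Finset.sum_nonneg
  intro ω _
  split <;> simp [hp0 ω]

lemma Pr_congr {Ω : Type*} [Fintype Ω] (p : Ω → ℝ) {S T : Ω → Prop}
    (h : ∀ ω, S ω ↔ T ω) : Pr p S = Pr p T := by
  unfold Pr
  exact Finset.sum_congr rfl fun ω _ => by rw [h ω]

lemma Pr_partition {Ω 𝓨 : Type*} [Fintype Ω] [Fintype 𝓨] (p : Ω → ℝ) (S : Ω → Prop)
    (Y : Ω → 𝓨) : Pr p S = ∑ y : 𝓨, Pr p (fun ω => S ω ∧ Y ω = y) := by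
  unfold Pr
  rw [Finset.sum_comm]
  refine Finset.sum_congr rfl fun ω _ => ?_
  by_cases hS : S ω <;> simp [hS]

/-- **MNAR inverse-odds identity.** If `O ⟂ M | (A, Y)` and `P(O=1 | Y=y, A=a) > 0`
for all `y`, then for each mediator value `m` and action `a`:
`P(M=m, O=0 | A=a) = Σ_y P(M=m, Y=y, O=1 | A=a) · P(O=0 | Y=y, A=a) / P(O=1 | Y=y, A=a)`. -/
theorem mnar_inverse_odds_identity
    {Ω 𝓐 𝓜 𝓨 : Type*} [Fintype Ω] [Fintype 𝓜] [Fintype 𝓨]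
    (p : Ω → ℝ) (hp0 : ∀ ω, 0 ≤ p ω) (hp1 : ∑ ω, p ω = 1)
    (Y : Ω → 𝓨) (M : Ω → 𝓜) (A : Ω → 𝓐) (O : Ω → ℕ)
    (hO : ∀ ω, O ω = 0 ∨ O ω = 1)
    -- conditional independence O ⟂ M | (A, Y)
    (hCI : ∀ (o : ℕ) (m : 𝓜) (a : 𝓐) (y : 𝓨),
      Pr p (fun ω => O ω = o ∧ M ω = m ∧ A ω = a ∧ Y ω = y) *
        Pr p (fun ω => A ω = a ∧ Y ω = y)
      = Pr p (fun ω => O ω = o ∧ A ω = a ∧ Y ω = y) *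
        Pr p (fun ω => M ω = m ∧ A ω = a ∧ Y ω = y))
    (a : 𝓐) (hA : 0 < Pr p (fun ω => A ω = a))
    (hpos : ∀ y : 𝓨, 0 < CPr p (fun ω => O ω = 1) (fun ω => Y ω = y ∧ A ω = a))
    (m : 𝓜) :
    CPr p (fun ω => M ω = m ∧ O ω = 0) (fun ω => A ω = a)
      = ∑ y : 𝓨,
          CPr p (fun ω => M ω = m ∧ Y ω = y ∧ O ω = 1) (fun ω => A ω = a) *
            (CPr p (fun ω => O ω = 0) (fun ω => Y ω = y ∧ A ω = a) /
              CPr p (fun ω => O ω = 1) (fun ω => Y ω = y ∧ A ω = a)) := by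
  set PA := Pr p (fun ω => A ω = a) with hPA
  -- canonical probabilities
  set J0 := fun y => Pr p (fun ω => O ω = 0 ∧ M ω = m ∧ A ω = a ∧ Y ω = y) with hJ0
  set J1 := fun y => Pr p (fun ω => O ω = 1 ∧ M ω = m ∧ A ω = a ∧ Y ω = y) with hJ1
  set Q0 := fun y => Pr p (fun ω => O ω = 0 ∧ A ω = a ∧ Y ω = y) with hQ0
  set Q1 := fun y => Pr p (fun ω => O ω = 1 ∧ A ω = a ∧ Y ω = y) with hQ1
  set R := fun y => Pr p (fun ω => A ω = a ∧ Y ω = y) with hR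
  have hRpos : ∀ y, 0 < R y := by
    intro y
    have h := hpos y
    unfold CPr at h
    have heq : Pr p (fun ω => Y ω = y ∧ A ω = a) = R y :=
      Pr_congr p (fun ω => by tauto)
    rw [heq] at h
    rcases lt_or_eq_of_le (Pr_nonneg p hp0 (fun ω => A ω = a ∧ Y ω = y)) with hlt | he
    · simpa only [hR] using hlt
    · have hRy0 : R y = 0 := by simp only [hR]; exact he.symm
      rw [hRy0, div_zero] at h
      exact absurd h (lt_irrefl 0)
  have hQ1pos : ∀ y, 0 < Q1 y := by
    intro y
    have h := hpos y
    unfold CPr at h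
    have heq : Pr p (fun ω => Y ω = y ∧ A ω = a) = R y :=
      Pr_congr p (fun ω => by tauto)
    have heq2 : Pr p (fun ω => O ω = 1 ∧ Y ω = y ∧ A ω = a) = Q1 y :=
      Pr_congr p (fun ω => by tauto)
    rw [heq, heq2] at h
    exact (div_pos_iff.mp h).resolve_right (fun ⟨_, h2⟩ => absurd (hRpos y) (by linarith)) |>.1
  -- CI identities
  have hCI0 : ∀ y, J0 y * R y = Q0 y * Pr p (fun ω => M ω = m ∧ A ω = a ∧ Y ω = y) :=
    fun y => hCI 0 m a y
  have hCI1 : ∀ y, J1 y * R y = Q1 y * Pr p (fun ω => M ω = m ∧ A ω = a ∧ Y ω = y) :=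
    fun y => hCI 1 m a y
  have key : ∀ y, J0 y * Q1 y = J1 y * Q0 y := by
    intro y
    have hRne := (hRpos y).ne'
    apply mul_left_cancel₀ hRne
    linear_combination Q1 y * hCI0 y - Q0 y * hCI1 y
  -- rewrite LHS
  unfold CPr
  have hnum : Pr p (fun ω => (M ω = m ∧ O ω = 0) ∧ A ω = a)
      = ∑ y : 𝓨, J0 y := by
    rw [Pr_partition p _ Y]
    exact Finset.sum_congr rfl fun y _ => Pr_congr p (fun ω => by tauto)
  rw [hnum, Finset.sum_div]
  refine Finset.sum_congr rfl fun y _ => ?_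
  have h1 : Pr p (fun ω => (M ω = m ∧ Y ω = y ∧ O ω = 1) ∧ A ω = a) = J1 y :=
    Pr_congr p (fun ω => by tauto)
  have h2 : Pr p (fun ω => O ω = 0 ∧ Y ω = y ∧ A ω = a) = Q0 y :=
    Pr_congr p (fun ω => by tauto)
  have h3 : Pr p (fun ω => O ω = 1 ∧ Y ω = y ∧ A ω = a) = Q1 y :=
    Pr_congr p (fun ω => by tauto)
  have h4 : Pr p (fun ω => Y ω = y ∧ A ω = a) = R y :=
    Pr_congr p (fun ω => by tauto)
  rw [h1, h2, h3, h4]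
  have hRne := (hRpos y).ne'
  have hQ1ne := (hQ1pos y).ne'
  have hPAne := hA.ne'
  field_simp
  rw [key y]
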